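/- arXiv:math/0311366 — 3 statements merged into one kernel-verified Lean document; each statement's English description precedes it below -/
import Mathlib

section
/- A root of unity ζ ∈ ℚ̄^× of exact order n is almost rational over ℚ (for the multiplicative group 𝔾_m/ℚ, i.e. for all σ, τ ∈ Gal(ℚ̄/ℚ), σ(ζ)·τ(ζ) = ζ² implies ζ = σ(ζ) = τ(ζ)) if and only if n divides 6. More generally, if K is a field such that the restriction map gives an isomorphism Gal(K(ζ_n)/K) ≅ Gal(ℚ(ζ_n)/ℚ), then the almost rational torsion points of μ_n over K are exactly the n-th roots of unity of order dividing 6. -/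
/-!
The Galois conjugates of a root of unity `ζ` of order `m` are the powers `ζ ^ u` with `u` a unit
of `ℤ/m`, and under the hypothesis every unit occurs. Hence `ζ` is almost rational iff the only
units `u, v` of `ℤ/m` with `u + v = 2` are `u = v = 1`. For `m ∣ 6` this is a finite check.
Otherwise some `p ^ e ∥ m` does not divide `6`, and `ℤ/p^e` has an element `k ≠ 0` with `1 ± k`
units (`k = p ^ (e - 1)` if `e ≥ 2`, `k = 2` if `p ≥ 5`); by the Chinese remainder theorem
`(k, 0) ∈ ℤ/p^e × ℤ/(m/p^e)` gives units `1 ± k ≠ 1` of `ℤ/m`.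
-/

theorem Nat.exists_prime_pow_factorization_not_dvd {m n : ℕ} (hm : m ≠ 0) (hn : n ≠ 0)
    (h : ¬ m ∣ n) : ∃ p, p.Prime ∧ ¬ p ^ m.factorization p ∣ n := by
  contrapose! h
  exact (Nat.factorization_prime_le_iff_dvd hm hn).1 fun p hp ↦
    (hp.pow_dvd_iff_le_factorization hn).1 (h p hp)

namespace ZMod

theorem units_eq_one_of_add_eq_two_of_dvd_six {m : ℕ} (h6 : m ∣ 6) (u v : (ZMod m)ˣ)
    (huv : (u : ZMod m) + v = 2) : u = 1 ∧ v = 1 := by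
  obtain rfl | rfl | rfl | rfl : m = 1 ∨ m = 2 ∨ m = 3 ∨ m = 6 := by
    have := Nat.le_of_dvd (by norm_num) h6
    interval_cases m <;> simp_all
  all_goals revert u v; decide

theorem exists_isUnit_one_add_isUnit_one_sub_of_prime_pow {p e : ℕ} (hp : p.Prime)
    (h6 : ¬ p ^ e ∣ 6) : ∃ k : ZMod (p ^ e), k ≠ 0 ∧ IsUnit (1 + k) ∧ IsUnit (1 - k) := by
  obtain _ | _ | e := e
  · simp at h6
  · -- `p ∤ 6`, so `k = 2` gives the units `3` and `-1`
    rw [pow_one] at h6 ⊢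
    refine ⟨2, ?_, ?_, by norm_num⟩
    · exact_mod_cast (ZMod.natCast_eq_zero_iff 2 p).not.2 fun h ↦ h6 (h.trans (by norm_num))
    · have : ((1 + 2 : ℕ) : ZMod p) = 1 + 2 := by norm_num
      rw [← this, ZMod.isUnit_iff_coprime, Nat.coprime_comm, hp.coprime_iff_not_dvd]
      exact fun h ↦ h6 (h.trans (by norm_num))
  · -- `k = p ^ (e + 1)` squares to zero
    have hk : IsNilpotent ((p ^ (e + 1) : ℕ) : ZMod (p ^ (e + 1 + 1))) :=
      ⟨2, by rw [← Nat.cast_pow, ZMod.natCast_eq_zero_iff, ← pow_mul]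
             exact pow_dvd_pow p (by omega)⟩
    refine ⟨_, ?_, hk.isUnit_one_add, hk.isUnit_one_sub⟩
    rw [Ne, ZMod.natCast_eq_zero_iff, Nat.pow_dvd_pow_iff_le_right hp.one_lt]
    omega

theorem exists_isUnit_one_add_isUnit_one_sub_mul_of_coprime {d t : ℕ} (hdt : d.Coprime t)
    (h : ∃ k : ZMod d, k ≠ 0 ∧ IsUnit (1 + k) ∧ IsUnit (1 - k)) :
    ∃ k : ZMod (d * t), k ≠ 0 ∧ IsUnit (1 + k) ∧ IsUnit (1 - k) := by
  obtain ⟨k, hk0, hk1, hk2⟩ := h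
  set e := ZMod.chineseRemainder hdt
  refine ⟨e.symm (k, 0), by simpa using hk0, ?_, ?_⟩
  · rw [← map_one e.symm, ← map_add, isUnit_map_iff, Prod.isUnit_iff]
    simpa using hk1
  · rw [← map_one e.symm, ← map_sub, isUnit_map_iff, Prod.isUnit_iff]
    simpa using hk2

theorem exists_isUnit_one_add_isUnit_one_sub_of_not_dvd_six {m : ℕ} (hm : m ≠ 0) (h6 : ¬ m ∣ 6) :
    ∃ k : ZMod m, k ≠ 0 ∧ IsUnit (1 + k) ∧ IsUnit (1 - k) := by
  obtain ⟨p, hp, hp6⟩ := Nat.exists_prime_pow_factorization_not_dvd hm (by norm_num) h6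
  have hcop : (p ^ m.factorization p).Coprime (ordCompl[p] m) :=
    (Nat.coprime_ordCompl hp hm).pow_left _
  rw [← Nat.ordProj_mul_ordCompl_eq_self m p]
  exact exists_isUnit_one_add_isUnit_one_sub_mul_of_coprime hcop
    (exists_isUnit_one_add_isUnit_one_sub_of_prime_pow hp hp6)

theorem forall_units_add_eq_two_iff_dvd_six {m : ℕ} (hm : m ≠ 0) :
    (∀ u v : (ZMod m)ˣ, (u : ZMod m) + v = 2 → u = 1 ∧ v = 1) ↔ m ∣ 6 := by
  refine ⟨fun h ↦ ?_, units_eq_one_of_add_eq_two_of_dvd_six⟩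
  by_contra h6
  obtain ⟨k, hk0, hk1, hk2⟩ := exists_isUnit_one_add_isUnit_one_sub_of_not_dvd_six hm h6
  have hu : hk1.unit = 1 :=
    (h hk1.unit hk2.unit (by rw [IsUnit.unit_spec, IsUnit.unit_spec]; ring)).1
  exact hk0 (by simpa using congrArg Units.val hu)

end ZMod

theorem IsOfFinOrder.pow_eq_pow_iff_natCast_eq {M : Type*} [Monoid M] {x : M}
    (hx : IsOfFinOrder x) {a b : ℕ} : x ^ a = x ^ b ↔ (a : ZMod (orderOf x)) = b := by
  rw [hx.pow_eq_pow_iff_modEq, ZMod.natCast_eq_natCast_iff]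

section Galois

variable {K L : Type*} [Field K] [Field L] [Algebra K L]

variable (K) in
def IsAlmostRational (ζ : L) : Prop :=
  ∀ σ τ : L ≃ₐ[K] L, σ ζ * τ ζ = ζ ^ 2 → ζ = σ ζ ∧ ζ = τ ζ

theorem forall_exists_algEquiv_apply_eq_pow_of_pow_eq_one {ξ ζ : L} (hξ : IsOfFinOrder ξ)
    (H : ∀ a : ℕ, a.Coprime (orderOf ξ) → ∃ σ : L ≃ₐ[K] L, σ ξ = ξ ^ a)
    (hζ : ζ ^ orderOf ξ = 1) (a : ℕ) (ha : a.Coprime (orderOf ζ)) :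
    ∃ σ : L ≃ₐ[K] L, σ ζ = ζ ^ a := by
  have : NeZero (orderOf ξ) := ⟨hξ.orderOf_pos.ne'⟩
  have hdvd := orderOf_dvd_of_pow_eq_one hζ
  obtain ⟨u, hu⟩ := ZMod.unitsMap_surjective hdvd (ZMod.unitOfCoprime a ha)
  obtain ⟨σ, hσ⟩ := H _ (ZMod.val_coe_unit_coprime u)
  have hζ_fin : IsOfFinOrder ζ := isOfFinOrder_iff_pow_eq_one.2 ⟨_, hξ.orderOf_pos, hζ⟩
  obtain ⟨k, -, rfl⟩ := (IsPrimitiveRoot.orderOf ξ).eq_pow_of_pow_eq_one hζ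
  refine ⟨σ, ?_⟩
  rw [map_pow, hσ, ← pow_mul, mul_comm, pow_mul, hζ_fin.pow_eq_pow_iff_natCast_eq,
    ZMod.natCast_val, ← ZMod.unitsMap_val hdvd, hu, ZMod.coe_unitOfCoprime]

theorem isAlmostRational_iff_forall_units_add_eq_two {ζ : L} (hζ : IsOfFinOrder ζ)
    (H : ∀ a : ℕ, a.Coprime (orderOf ζ) → ∃ σ : L ≃ₐ[K] L, σ ζ = ζ ^ a) :
    IsAlmostRational K ζ ↔ ∀ u v : (ZMod (orderOf ζ))ˣ,
      (u : ZMod (orderOf ζ)) + (v : ZMod (orderOf ζ)) = 2 → u = 1 ∧ v = 1 := by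
  have : NeZero (orderOf ζ) := ⟨hζ.orderOf_pos.ne'⟩
  have pow_val_mul_pow_val_eq_sq : ∀ u v : (ZMod (orderOf ζ))ˣ,
      ζ ^ (u : ZMod (orderOf ζ)).val * ζ ^ (v : ZMod (orderOf ζ)).val = ζ ^ 2 ↔
        (u : ZMod (orderOf ζ)) + (v : ZMod (orderOf ζ)) = 2 := by
    intro u v
    rw [← pow_add, hζ.pow_eq_pow_iff_natCast_eq]
    push_cast
    rw [ZMod.natCast_zmod_val, ZMod.natCast_zmod_val]
  have self_eq_pow_val :
      ∀ u : (ZMod (orderOf ζ))ˣ, ζ = ζ ^ (u : ZMod (orderOf ζ)).val ↔ u = 1 := by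
    intro u
    rw [← Units.val_eq_one, eq_comm]
    simpa using hζ.pow_eq_pow_iff_natCast_eq (a := (u : ZMod (orderOf ζ)).val) (b := 1)
  constructor
  · intro h u v huv
    obtain ⟨σ, hσ⟩ := H _ (ZMod.val_coe_unit_coprime u)
    obtain ⟨τ, hτ⟩ := H _ (ZMod.val_coe_unit_coprime v)
    obtain ⟨hσ1, hτ1⟩ := h σ τ (by rwa [hσ, hτ, pow_val_mul_pow_val_eq_sq])
    exact ⟨(self_eq_pow_val u).1 (hσ ▸ hσ1), (self_eq_pow_val v).1 (hτ ▸ hτ1)⟩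
  · intro h σ τ hστ
    have hprim := IsPrimitiveRoot.orderOf ζ
    rw [← hprim.autToPow_spec K σ, ← hprim.autToPow_spec K τ] at hστ ⊢
    obtain ⟨hσ1, hτ1⟩ := h _ _ ((pow_val_mul_pow_val_eq_sq _ _).1 hστ)
    exact ⟨(self_eq_pow_val _).2 hσ1, (self_eq_pow_val _).2 hτ1⟩

end Galois

open Polynomial in
theorem exists_algEquiv_apply_eq_pow_of_coprime_rat {L : Type*} [Field L] [CharZero L]
    [Normal ℚ L] {ζ : L} (hζ : IsOfFinOrder ζ) (a : ℕ) (ha : a.Coprime (orderOf ζ)) :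
    ∃ σ : L ≃ₐ[ℚ] L, σ ζ = ζ ^ a := by
  have hprim := IsPrimitiveRoot.orderOf ζ
  refine minpoly.exists_algEquiv_of_root' (Algebra.IsAlgebraic.isAlgebraic ζ) ?_
  rw [← cyclotomic_eq_minpoly_rat hprim hζ.orderOf_pos, aeval_def, ← eval_map, map_cyclotomic]
  exact (hprim.pow_of_coprime a ha).isRoot_cyclotomic hζ.orderOf_pos

/-- Instance search finds the `ℚ`-algebra structure `DivisionRing.toRatAlgebra`, which agrees with
`AlgebraicClosure.instAlgebra ℚ` only up to unfolding. -/
instance AlgebraicClosure.normal_rat : Normal ℚ (AlgebraicClosure ℚ) :=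
  @IsAlgClosure.normal ℚ _ _ _ (AlgebraicClosure.instAlgebra ℚ) inferInstance

theorem almostRational_root_of_unity_iff_order_dvd_six :
    -- Over `ℚ`: a root of unity `ζ ∈ ℚ̄` of exact order `n` is almost rational over `ℚ`
    -- if and only if `n ∣ 6`.
    (∀ (n : ℕ), 0 < n → ∀ ζ : AlgebraicClosure ℚ, orderOf ζ = n →
      ((∀ σ τ : AlgebraicClosure ℚ ≃ₐ[ℚ] AlgebraicClosure ℚ,
          σ ζ * τ ζ = ζ ^ 2 → ζ = σ ζ ∧ ζ = τ ζ) ↔ n ∣ 6)) ∧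
    -- More generally, over a field `K` with `Gal(K(ζₙ)/K) ≅ Gal(ℚ(ζₙ)/ℚ)`:
    -- the almost rational torsion points of `μₙ` are exactly the `n`-th roots of unity of
    -- order dividing `6`.
    (∀ (K : Type) (_ : Field K), ∀ (n : ℕ), 0 < n →
      ∀ ξ : AlgebraicClosure K, orderOf ξ = n →
      (∀ a : ℕ, a.Coprime n →
        ∃ σ : AlgebraicClosure K ≃ₐ[K] AlgebraicClosure K, σ ξ = ξ ^ a) →
      ∀ ζ : AlgebraicClosure K, ζ ^ n = 1 →
      ((∀ σ τ : AlgebraicClosure K ≃ₐ[K] AlgebraicClosure K,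
          σ ζ * τ ζ = ζ ^ 2 → ζ = σ ζ ∧ ζ = τ ζ) ↔ orderOf ζ ∣ 6)) := by
  refine ⟨fun n hn ζ hζ ↦ ?_, fun K _ n hn ξ hξ H ζ hζ ↦ ?_⟩
  · have hfin : IsOfFinOrder ζ := orderOf_pos_iff.1 (hζ ▸ hn)
    rw [← hζ, ← ZMod.forall_units_add_eq_two_iff_dvd_six hfin.orderOf_pos.ne']
    exact isAlmostRational_iff_forall_units_add_eq_two hfin
      (exists_algEquiv_apply_eq_pow_of_coprime_rat hfin)
  · subst hξ
    have hζ_fin : IsOfFinOrder ζ := isOfFinOrder_iff_pow_eq_one.2 ⟨_, hn, hζ⟩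
    rw [← ZMod.forall_units_add_eq_two_iff_dvd_six hζ_fin.orderOf_pos.ne']
    exact isAlmostRational_iff_forall_units_add_eq_two hζ_fin
      (forall_exists_algEquiv_apply_eq_pow_of_pow_eq_one (orderOf_pos_iff.1 hn) H hζ)
end

section
/- Let E be a semistable elliptic curve over ℚ. Suppose Q ∈ E(ℚ̄) has order 3 and generates a Galois-stable subgroup of E[3] isomorphic to μ_3 (Galois acts on ⟨Q⟩ via the mod 3 cyclotomic character), R ∈ E(ℚ)[9] is a rational point of 3-power order, and S ∈ E(ℚ(√−3))[16] is a point of 2-power order defined over ℚ(√−3). Then P = Q + R + S is an almost rational torsion point over ℚ. -/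
open WeierstrassCurve WeierstrassCurve.Affine
open scoped WeierstrassCurve.Affine

noncomputable section

abbrev Qbar : Type := AlgebraicClosure ℚ
abbrev Gal : Type := Qbar ≃ₐ[ℚ] Qbar

instance : DecidableEq Qbar := Classical.decEq _

/-- `W` is semistable: at every prime `p` it admits an integral Weierstrass model
(isomorphic to `W` over `ℚ` via a change of variables) whose reduction modulo `p`
is not additive, i.e. `p ∤ Δ` (good reduction) or `p ∤ c₄` (multiplicative reduction). -/
def IsSemistable (W : WeierstrassCurve ℚ) : Prop :=
  ∀ p : ℕ, p.Prime →
    ∃ (V : WeierstrassCurve ℤ) (C : WeierstrassCurve.VariableChange ℚ),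
      V.map (Int.castRingHom ℚ) = C • W ∧
      (¬ (p : ℤ) ∣ V.Δ ∨ ¬ (p : ℤ) ∣ V.c₄)

variable (W : WeierstrassCurve ℚ)

/-- The action of `σ ∈ Gal(ℚ̄/ℚ)` on the group `E(ℚ̄) = (W⁄Qbar).Point` of `ℚ̄`-points of `W`. -/
def galAct (σ : Gal) : (W⁄Qbar).Point →+ (W⁄Qbar).Point :=
  WeierstrassCurve.Affine.Point.map (W' := W) σ.toAlgHom

/-- `P ∈ E(ℚ̄)` is almost rational over `ℚ`: whenever `σ P + τ P = 2 P` for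
`σ, τ ∈ Gal(ℚ̄/ℚ)`, we have `P = σ P = τ P`. -/
def AlmostRational (P : (W⁄Qbar).Point) : Prop :=
  ∀ σ τ : Gal, galAct W σ P + galAct W τ P = 2 • P →
    galAct W σ P = P ∧ galAct W τ P = P

/-- The Galois module generated by `P` and all of its Galois conjugates. -/
def galModule (P : (W⁄Qbar).Point) : AddSubgroup (W⁄Qbar).Point :=
  AddSubgroup.closure {Q | ∃ σ : Gal, Q = galAct W σ P}

/-- The subgroup `E[n]` of points killed by `n`. -/
def torsion (n : ℕ) : AddSubgroup (W⁄Qbar).Point where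
  carrier := {P | n • P = 0}
  zero_mem' := smul_zero n
  add_mem' := by
    intro a b ha hb
    simp only [Set.mem_setOf_eq] at *
    rw [nsmul_add, ha, hb, add_zero]
  neg_mem' := by
    intro a ha
    simp only [Set.mem_setOf_eq] at *
    rw [neg_nsmul, ha, neg_zero]

/-- A Galois-stable subgroup of points. -/
def IsGaloisStable (N : AddSubgroup (W⁄Qbar).Point) : Prop :=
  ∀ σ : Gal, ∀ x ∈ N, galAct W σ x ∈ N

/-- `E[n]` is reducible: it contains a nonzero proper Galois-stable subgroup. -/
def TorsionIsReducible (n : ℕ) : Prop :=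
  ∃ N : AddSubgroup (W⁄Qbar).Point, IsGaloisStable W N ∧ N ≤ torsion W n ∧
    N ≠ ⊥ ∧ N ≠ torsion W n

/-- The `ℓ`-primary part of a subgroup of points. -/
def primaryPart (ℓ : ℕ) (N : AddSubgroup (W⁄Qbar).Point) : AddSubgroup (W⁄Qbar).Point where
  carrier := {x | x ∈ N ∧ ∃ j : ℕ, ℓ ^ j • x = 0}
  zero_mem' := ⟨N.zero_mem, 0, smul_zero _⟩
  add_mem' := by
    rintro a b ⟨haN, i, hi⟩ ⟨hbN, j, hj⟩
    refine ⟨N.add_mem haN hbN, i + j, ?_⟩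
    have ha' : ℓ ^ (i + j) • a = 0 := by rw [pow_add, mul_nsmul, hi, nsmul_zero]
    have hb' : ℓ ^ (i + j) • b = 0 := by rw [pow_add, mul_comm, mul_nsmul, hj, nsmul_zero]
    rw [nsmul_add, ha', hb', add_zero]
  neg_mem' := by
    rintro a ⟨haN, i, hi⟩
    exact ⟨N.neg_mem haN, i, by rw [neg_nsmul, hi, neg_zero]⟩

/-- The ring of all algebraic integers inside `ℚ̄`. -/
abbrev Zbar : Subalgebra ℤ Qbar := integralClosure ℤ Qbar

/-- `σ` belongs to the inertia subgroup of `Gal(ℚ̄/ℚ)` attached to the maximal ideal `Q`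
of the ring of algebraic integers: `σ x ≡ x mod Q` for every algebraic integer `x`. -/
def IsInInertia (Q : Ideal Zbar) (σ : Gal) : Prop :=
  ∀ x : Zbar, ∃ y ∈ Q, (y : Qbar) = σ (x : Qbar) - (x : Qbar)

/-- A Galois-stable set of points is unramified at the rational prime `p` if the inertia
group of every prime of `ℚ̄` above `p` acts trivially on it. -/
def UnramifiedAt (p : ℕ) (N : AddSubgroup (W⁄Qbar).Point) : Prop :=
  ∀ Q : Ideal Zbar, Q.IsMaximal → (p : Zbar) ∈ Q →
    ∀ σ : Gal, IsInInertia Q σ → ∀ x ∈ N, galAct W σ x = x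

/-! The point `σP + τP - 2P` splits into a `3`-torsion part coming from `Q` and a `16`-torsion
part coming from `S` (`R` is rational), so both parts vanish and `σQ + τQ = 2Q`. Galois acts on
`⟨Q⟩` through the cyclotomic character, so `σQ, τQ ∈ {Q, 2Q}`, and the only solution in a group
of order `3` is `σQ = τQ = Q`. Hence `σ` and `τ` fix `ζ₃`, so they fix `√-3 = 2ζ₃ + 1` and
therefore `S`. -/

theorem eq_zero_of_add_eq_zero_of_coprime {G : Type*} [AddCommGroup G] {a b : G} {m n : ℕ}
    (hmn : m.Coprime n) (ha : m • a = 0) (hb : n • b = 0) (hab : a + b = 0) : a = 0 := by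
  have hna : n • a = 0 := by rw [eq_neg_of_add_eq_zero_left hab, smul_neg, hb, neg_zero]
  have hdvd :=
    Nat.dvd_gcd (addOrderOf_dvd_of_nsmul_eq_zero ha) (addOrderOf_dvd_of_nsmul_eq_zero hna)
  rwa [hmn.gcd_eq_one, Nat.dvd_one, AddMonoid.addOrderOf_eq_one_iff] at hdvd

theorem eq_and_eq_of_add_eq_two_nsmul {G : Type*} [AddCommGroup G] {Q x y : G}
    (hQ : addOrderOf Q = 3) (hx : x = Q ∨ x = 2 • Q) (hy : y = Q ∨ y = 2 • Q)
    (hxy : x + y = 2 • Q) : x = Q ∧ y = Q := by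
  have hQ0 : Q ≠ 0 := by rintro rfl; simp at hQ
  have h2Q : 2 • Q ≠ 0 := nsmul_ne_zero_of_lt_addOrderOf two_ne_zero (by rw [hQ]; norm_num)
  rcases hx with rfl | rfl <;> rcases hy with rfl | rfl
  · exact ⟨rfl, rfl⟩
  · exact absurd (add_eq_right.mp hxy) hQ0
  · exact absurd (add_eq_left.mp hxy) hQ0
  · exact absurd (add_eq_left.mp hxy) h2Q

theorem IsPrimitiveRoot.eq_or_eq_sq_of_three {R : Type*} [CommRing R] [IsDomain R] {ζ ξ : R}
    (hζ : IsPrimitiveRoot ζ 3) (hξ : IsPrimitiveRoot ξ 3) : ξ = ζ ∨ ξ = ζ ^ 2 := by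
  obtain ⟨i, hi, rfl⟩ := hζ.eq_pow_of_pow_eq_one hξ.pow_eq_one
  interval_cases i
  · exact absurd (pow_zero ζ) (hξ.ne_one (by norm_num))
  · exact .inl (pow_one ζ)
  · exact .inr rfl

theorem IsPrimitiveRoot.two_mul_add_one_sq {R : Type*} [CommRing R] [IsDomain R] {ζ : R}
    (hζ : IsPrimitiveRoot ζ 3) : (2 * ζ + 1) ^ 2 = -3 := by
  have h := hζ.geom_sum_eq_zero (by norm_num)
  simp only [Finset.sum_range_succ, Finset.sum_range_zero] at h
  linear_combination 4 * h

section GaloisAction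

variable {W}

theorem mem_torsion {n : ℕ} {P : (W⁄Qbar).Point} : P ∈ torsion W n ↔ n • P = 0 := Iff.rfl

theorem galAct_mem_torsion {n : ℕ} {P : (W⁄Qbar).Point} (σ : Gal) (hP : P ∈ torsion W n) :
    galAct W σ P ∈ torsion W n := by
  rw [mem_torsion, ← map_nsmul, mem_torsion.mp hP, map_zero]

theorem galAct_add_galAct_sub_two_nsmul_mem_torsion {n : ℕ} {P : (W⁄Qbar).Point}
    (σ τ : Gal) (hP : P ∈ torsion W n) :
    galAct W σ P + galAct W τ P - 2 • P ∈ torsion W n :=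
  sub_mem (add_mem (galAct_mem_torsion σ hP) (galAct_mem_torsion τ hP)) (nsmul_mem hP 2)

variable {ζ : Qbar} {Q : (W⁄Qbar).Point}

theorem galAct_eq_self_or_eq_two_nsmul (hζ : IsPrimitiveRoot ζ 3)
    (hQζ : ∀ (σ : Gal) (a : ℕ), σ ζ = ζ ^ a → galAct W σ Q = a • Q) (σ : Gal) :
    galAct W σ Q = Q ∨ galAct W σ Q = 2 • Q := by
  rcases hζ.eq_or_eq_sq_of_three (hζ.map_of_injective σ.injective) with h | h
  · exact .inl (by simpa using hQζ σ 1 (by simpa using h))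
  · exact .inr (hQζ σ 2 h)

theorem apply_eq_self_of_galAct_eq_self (hζ : IsPrimitiveRoot ζ 3)
    (hQζ : ∀ (σ : Gal) (a : ℕ), σ ζ = ζ ^ a → galAct W σ Q = a • Q) (hQ0 : Q ≠ 0) {σ : Gal}
    (hσ : galAct W σ Q = Q) : σ ζ = ζ := by
  refine (hζ.eq_or_eq_sq_of_three (hζ.map_of_injective σ.injective)).resolve_right fun h => hQ0 ?_
  rw [hQζ σ 2 h, two_nsmul] at hσ
  exact add_eq_left.mp hσ

end GaloisAction

theorem almostRational_of_add_mu3_rational_sqrtNeg3_general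
    (W : WeierstrassCurve ℚ)
    (Q R S : (W⁄Qbar).Point)
    (hQ : addOrderOf Q = 3)
    (hQmu : ∃ ζ : Qbar, IsPrimitiveRoot ζ 3 ∧
      ∀ (σ : Gal) (a : ℕ), σ ζ = ζ ^ a → galAct W σ Q = a • Q)
    (hR9 : 9 • R = 0) (hRrat : ∀ σ : Gal, galAct W σ R = R)
    (hS16 : 16 • S = 0)
    (hSfield : ∀ s : Qbar, s ^ 2 = -3 → ∀ σ : Gal, σ s = s → galAct W σ S = S) :
    IsOfFinAddOrder (Q + R + S) ∧ AlmostRational W (Q + R + S) := by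
  obtain ⟨ζ, hζ, hQζ⟩ := hQmu
  have hQ0 : Q ≠ 0 := by rintro rfl; simp at hQ
  refine ⟨.add (.add (addOrderOf_pos_iff.mp (by rw [hQ]; norm_num))
    (isOfFinAddOrder_iff_nsmul_eq_zero.mpr ⟨9, by norm_num, hR9⟩))
    (isOfFinAddOrder_iff_nsmul_eq_zero.mpr ⟨16, by norm_num, hS16⟩), fun σ τ h => ?_⟩
  have hfix : ∀ υ : Gal, galAct W υ Q = Q → galAct W υ (Q + R + S) = Q + R + S := by
    intro υ hυ
    have hυζ : υ (2 * ζ + 1) = 2 * ζ + 1 := by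
      rw [map_add, map_mul, map_ofNat, map_one, apply_eq_self_of_galAct_eq_self hζ hQζ hQ0 hυ]
    rw [map_add, map_add, hυ, hRrat, hSfield _ hζ.two_mul_add_one_sq υ hυζ]
  have hsplit :
      (galAct W σ Q + galAct W τ Q - 2 • Q) + (galAct W σ S + galAct W τ S - 2 • S) = 0 := by
    simp only [map_add, hRrat] at h
    rw [← sub_eq_zero.mpr h]
    abel
  have hQsum := eq_zero_of_add_eq_zero_of_coprime (by norm_num : Nat.Coprime 3 16)
    (galAct_add_galAct_sub_two_nsmul_mem_torsion σ τ
      (mem_torsion.mpr (hQ ▸ addOrderOf_nsmul_eq_zero Q)))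
    (galAct_add_galAct_sub_two_nsmul_mem_torsion σ τ (mem_torsion.mpr hS16)) hsplit
  obtain ⟨hσ, hτ⟩ := eq_and_eq_of_add_eq_two_nsmul hQ (galAct_eq_self_or_eq_two_nsmul hζ hQζ σ)
    (galAct_eq_self_or_eq_two_nsmul hζ hQζ τ) (sub_eq_zero.mp hQsum)
  exact ⟨hfix σ hσ, hfix τ hτ⟩

/-- On a semistable elliptic curve `E/ℚ`, if `Q` has order `3` and generates a
`μ₃`-subgroup of `E[3]` (Galois acts on `⟨Q⟩` by the mod `3` cyclotomic character),
`R ∈ E(ℚ)[9]` is rational of `3`-power order, and `S ∈ E(ℚ(√-3))[16]` has `2`-power order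
and is defined over `ℚ(√-3)`, then `P = Q + R + S` is an almost rational torsion point
over `ℚ`. -/
theorem almostRational_of_add_mu3_rational_sqrtNeg3
    (W : WeierstrassCurve ℚ) [W.IsElliptic] (hW : IsSemistable W)
    (Q R S : (W⁄Qbar).Point)
    (hQ : addOrderOf Q = 3)
    (hQmu : ∃ ζ : Qbar, IsPrimitiveRoot ζ 3 ∧
      ∀ (σ : Gal) (a : ℕ), σ ζ = ζ ^ a → galAct W σ Q = a • Q)
    (hR9 : 9 • R = 0) (hRrat : ∀ σ : Gal, galAct W σ R = R)
    (hS16 : 16 • S = 0)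
    (hSfield : ∀ s : Qbar, s ^ 2 = -3 → ∀ σ : Gal, σ s = s → galAct W σ S = S) :
    IsOfFinAddOrder (Q + R + S) ∧ AlmostRational W (Q + R + S) :=
  almostRational_of_add_mu3_rational_sqrtNeg3_general W Q R S hQ hQmu hR9 hRrat hS16 hSfield

end
end

section
/- For every integer r ≥ 2, the group cohomology H¹((ℤ/2^rℤ)^×, ℤ/2^rℤ), where the unit group (ℤ/2^rℤ)^× acts on ℤ/2^rℤ by multiplication, is isomorphic to ℤ/2ℤ. Equivalently, H¹(Gal(ℚ(ζ_{2^r})/ℚ), μ_{2^r}) ≅ ℤ/2ℤ. -/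
/-!
The units `(ℤ/2^(s+2))ˣ` are generated by `-1` and `5`, so a 1-cocycle `f` is determined by
`a = f(-1)` and `b = f(5)`. Since `-1` and `5` commute, `2 (2a + b) = 0`; since `5` has order
`2^s` and `∑_{i < 2^s} 5^i = 2^s · (odd)`, also `2^s b = 0`. The invariant `2a + b` therefore lies
in the 2-torsion `{0, 2^(s+1)}` and vanishes on coboundaries. Conversely, if `2a + b = 0` then
`2^(s+1) a = 0`, so `a = 2c` is even and `f` agrees with the coboundary of `-c` on the generators,
hence everywhere. The cocycle `g ↦ 2^s · [g ≡ 3 mod 4]` has invariant `2^(s+1)`, so `H¹` has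
exactly two elements.
-/

open Finset groupCohomology

namespace groupCohomology

theorem IsCocycle₁.map_pow {G A : Type*} [Monoid G] [AddCommGroup A] [MulAction G A]
    {f : G → A} (hf : IsCocycle₁ f) (g : G) (k : ℕ) :
    f (g ^ k) = ∑ i ∈ range k, g ^ i • f g := by
  induction k with
  | zero => simpa using map_one_of_isCocycle₁ hf
  | succ k ih => rw [pow_succ, hf, ih, sum_range_succ, add_comm]

theorem IsCoboundary₁.isCocycle₁ {G A : Type*} [Monoid G] [AddCommGroup A]
    [DistribMulAction G A] {f : G → A} (hf : IsCoboundary₁ f) : IsCocycle₁ f := by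
  obtain ⟨x, hx⟩ := hf
  intro g h
  simp only [← hx, mul_smul, smul_sub]
  abel

section Group

variable {G A : Type*} [Group G] [AddCommGroup A] [MulAction G A]

theorem IsCocycle₁.smul_add_eq_of_commute {f : G → A} (hf : IsCocycle₁ f) {g h : G}
    (hgh : Commute g h) : g • f h + f g = h • f g + f h := by
  rw [← hf, ← hf, hgh.eq]

theorem IsCocycle₁.eq_of_eqOn_of_closure_eq_top {f₁ f₂ : G → A} (hf₁ : IsCocycle₁ f₁)
    (hf₂ : IsCocycle₁ f₂) {S : Set G} (hS : Subgroup.closure S = ⊤) (h : Set.EqOn f₁ f₂ S) :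
    f₁ = f₂ := by
  funext g
  have hg : g ∈ Subgroup.closure S := hS ▸ Subgroup.mem_top g
  induction hg using Subgroup.closure_induction with
  | mem g hg => exact h hg
  | one => rw [map_one_of_isCocycle₁ hf₁, map_one_of_isCocycle₁ hf₂]
  | mul g h _ _ ihg ihh => rw [hf₁, hf₂, ihg, ihh]
  | inv g _ ih =>
    rw [← smul_left_cancel_iff g, map_inv_of_isCocycle₁ hf₁, map_inv_of_isCocycle₁ hf₂, ih]

end Group

end groupCohomology

namespace ZMod

theorem exists_geom_sum_five_eq (s : ℕ) :
    ∃ y : ℤ, ∑ i ∈ range (2 ^ s), (5 : ℤ) ^ i = 2 ^ s * (1 + 2 * y) := by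
  obtain ⟨y, hy⟩ := exists_one_add_mul_pow_prime_pow_eq (R := ℤ) (u := 4) (v := 2) Nat.prime_two
    (by norm_num) (by norm_num) 1 s
  refine ⟨y, mul_right_cancel₀ (four_ne_zero (α := ℤ)) ?_⟩
  have h := geom_sum_mul (5 : ℤ) (2 ^ s)
  norm_num at hy h
  rw [h, hy]
  ring

theorem isUnit_one_add_two_mul {k : ℕ} (y : ZMod (2 ^ k)) : IsUnit (1 + 2 * y) := by
  have h2 : IsNilpotent (2 : ZMod (2 ^ k)) := ⟨k, by exact_mod_cast natCast_self (2 ^ k)⟩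
  exact ((Commute.all _ y).isNilpotent_mul_right h2).isUnit_one_add

theorem two_pow_ne_zero (k : ℕ) : (2 : ZMod (2 ^ (k + 1))) ^ k ≠ 0 := by
  have h : ¬ 2 ^ (k + 1) ∣ 2 ^ k := fun h => by
    have := (Nat.pow_dvd_pow_iff_le_right one_lt_two).1 h
    omega
  exact_mod_cast mt (natCast_eq_zero_iff _ _).1 h

theorem exists_eq_two_mul_of_two_pow_mul_eq_zero {k : ℕ} {x : ZMod (2 ^ (k + 1))}
    (hx : 2 ^ k * x = 0) : ∃ c, x = 2 * c := by
  rw [← natCast_zmod_val x] at hx ⊢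
  have hdvd : 2 ^ k * 2 ∣ 2 ^ k * x.val := by
    rw [← pow_succ]
    exact_mod_cast (natCast_eq_zero_iff _ _).1 (by push_cast; exact hx)
  obtain ⟨c, hc⟩ := Nat.dvd_of_mul_dvd_mul_left (by positivity) hdvd
  exact ⟨c, by rw [hc]; push_cast; rfl⟩

theorem eq_zero_or_eq_two_pow_of_two_mul_eq_zero {k : ℕ} {x : ZMod (2 ^ (k + 1))}
    (hx : 2 * x = 0) : x = 0 ∨ x = 2 ^ k := by
  rw [← natCast_zmod_val x] at hx ⊢
  have hdvd : 2 * 2 ^ k ∣ 2 * x.val := by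
    rw [← pow_succ']
    exact_mod_cast (natCast_eq_zero_iff _ _).1 (by push_cast; exact hx)
  obtain ⟨c, hc⟩ := Nat.dvd_of_mul_dvd_mul_left two_pos hdvd
  have hlt : 2 ^ k * c < 2 ^ k * 2 := by rw [← hc, ← pow_succ]; exact val_lt x
  obtain rfl | rfl : c = 0 ∨ c = 1 := by
    have := lt_of_mul_lt_mul_left hlt (Nat.zero_le _)
    omega
  all_goals simp [hc]

theorem four_dvd_two_pow (s : ℕ) : 4 ∣ 2 ^ (s + 2) := Dvd.intro_left (2 ^ s) (by ring)

theorem mul_two_pow_eq_of_cast_eq {s : ℕ} {x y : ZMod (2 ^ (s + 2))}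
    (h : (cast x : ZMod 4) = cast y) : x * 2 ^ s = y * 2 ^ s := by
  rw [← sub_eq_zero, ← sub_mul]
  obtain ⟨d, hd⟩ : ∃ d : ℕ, (d : ZMod (2 ^ (s + 2))) = x - y := ⟨_, natCast_zmod_val _⟩
  have hd4 : ((d : ℕ) : ZMod 4) = 0 := by
    rw [← cast_natCast (four_dvd_two_pow s) d, hd, cast_sub (four_dvd_two_pow s), h, sub_self]
  obtain ⟨w, rfl⟩ := (natCast_eq_zero_iff _ _).1 hd4
  rw [← hd]
  calc ((4 * w : ℕ) : ZMod (2 ^ (s + 2))) * 2 ^ s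
      = w * ((2 ^ (s + 2) : ℕ) : ZMod (2 ^ (s + 2))) := by push_cast; ring
    _ = 0 := by rw [natCast_self, mul_zero]

theorem units_four_eq_one_or_eq_neg_one (a : (ZMod 4)ˣ) : a = 1 ∨ a = -1 := by
  revert a
  decide

section UnitsTwoPow

variable (s : ℕ)

def unitFive : (ZMod (2 ^ (s + 2)))ˣ := unitOfCoprime 5 (Nat.Coprime.pow_right _ (by decide))

@[simp]
theorem coe_unitFive : (unitFive s : ZMod (2 ^ (s + 2))) = 5 := by
  simp [unitFive]

theorem orderOf_unitFive : orderOf (unitFive s) = 2 ^ s := by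
  rw [← orderOf_units, coe_unitFive, orderOf_five]

def unitsMapFour : (ZMod (2 ^ (s + 2)))ˣ →* (ZMod 4)ˣ := unitsMap (four_dvd_two_pow s)

@[simp]
theorem unitsMapFour_unitFive : unitsMapFour s (unitFive s) = 1 := by
  ext
  have h5 := cast_natCast (R := ZMod 4) (four_dvd_two_pow s) 5
  push_cast at h5
  rw [unitsMapFour, unitsMap_val, coe_unitFive, h5]
  rfl

@[simp]
theorem unitsMapFour_neg_one : unitsMapFour s (-1) = -1 := by
  ext
  rw [unitsMapFour, unitsMap_val, Units.val_neg, Units.val_one, cast_neg (four_dvd_two_pow s),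
    cast_one (four_dvd_two_pow s), Units.val_neg, Units.val_one]

theorem neg_one_notMem_zpowers_unitFive : -1 ∉ Subgroup.zpowers (unitFive s) := by
  intro h
  have : unitsMapFour s (-1) = 1 := by
    obtain ⟨k, hk⟩ := Subgroup.mem_zpowers_iff.1 h
    rw [← hk, map_zpow, unitsMapFour_unitFive, one_zpow]
  rw [unitsMapFour_neg_one] at this
  exact absurd this (by decide)

theorem index_zpowers_unitFive : (Subgroup.zpowers (unitFive s)).index = 2 := by
  have h := (Subgroup.zpowers (unitFive s)).card_mul_index
  rw [Nat.card_zpowers, orderOf_unitFive, Nat.card_eq_fintype_card, card_units_eq_totient,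
    Nat.totient_prime_pow_succ Nat.prime_two] at h
  exact Nat.eq_of_mul_eq_mul_left (by positivity) (h.trans (by ring))

theorem closure_neg_one_unitFive : Subgroup.closure {-1, unitFive s} = ⊤ := by
  refine eq_top_iff.2 fun g _ => ?_
  have hmem : g ∈ Subgroup.zpowers (unitFive s) ∨ -1 * g ∈ Subgroup.zpowers (unitFive s) := by
    rw [Subgroup.mul_mem_iff_of_index_two (index_zpowers_unitFive s)]
    have := neg_one_notMem_zpowers_unitFive s
    tauto
  have hle : Subgroup.zpowers (unitFive s) ≤ Subgroup.closure {-1, unitFive s} :=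
    Subgroup.zpowers_le.2 (Subgroup.subset_closure (by simp))
  have hneg : (-1 : (ZMod (2 ^ (s + 2)))ˣ) ∈ Subgroup.closure {-1, unitFive s} :=
    Subgroup.subset_closure (by simp)
  rcases hmem with h | h
  · exact hle h
  · simpa using mul_mem hneg (hle h)

variable {s}

theorem coe_mul_two_pow_eq_of_unitsMapFour_eq {g h : (ZMod (2 ^ (s + 2)))ˣ}
    (hgh : unitsMapFour s g = unitsMapFour s h) :
    (g : ZMod (2 ^ (s + 2))) * 2 ^ s = h * 2 ^ s :=
  mul_two_pow_eq_of_cast_eq <| by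
    rw [← unitsMap_val (four_dvd_two_pow s), ← unitsMap_val (four_dvd_two_pow s)]
    exact congrArg Units.val hgh

theorem coe_mul_two_pow_of_unitsMapFour_eq_one {g : (ZMod (2 ^ (s + 2)))ˣ}
    (hg : unitsMapFour s g = 1) : (g : ZMod (2 ^ (s + 2))) * 2 ^ s = 2 ^ s := by
  simpa using coe_mul_two_pow_eq_of_unitsMapFour_eq (h := 1) (by rw [hg, map_one])

theorem coe_mul_two_pow_of_unitsMapFour_eq_neg_one {g : (ZMod (2 ^ (s + 2)))ˣ}
    (hg : unitsMapFour s g = -1) : (g : ZMod (2 ^ (s + 2))) * 2 ^ s = -2 ^ s := by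
  simpa using coe_mul_two_pow_eq_of_unitsMapFour_eq (h := -1) (by rw [hg, unitsMapFour_neg_one])

end UnitsTwoPow

section Cocycles

variable (s : ℕ)

def cocycleObstruction : ((ZMod (2 ^ (s + 2)))ˣ → ZMod (2 ^ (s + 2))) →+ ZMod (2 ^ (s + 2)) :=
  AddMonoidHom.mk' (fun f => 2 * f (-1) + f (unitFive s)) fun f g => by
    simp only [Pi.add_apply]
    ring

def mod4Cocycle (g : (ZMod (2 ^ (s + 2)))ˣ) : ZMod (2 ^ (s + 2)) :=
  if unitsMapFour s g = 1 then 0 else 2 ^ s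

variable {s} {f : (ZMod (2 ^ (s + 2)))ˣ → ZMod (2 ^ (s + 2))}

theorem cocycleObstruction_apply : cocycleObstruction s f = 2 * f (-1) + f (unitFive s) := rfl

theorem two_mul_cocycleObstruction (hf : IsCocycle₁ f) : 2 * cocycleObstruction s f = 0 := by
  have h := hf.smul_add_eq_of_commute (Commute.all (-1) (unitFive s))
  simp only [Units.smul_def, smul_eq_mul, Units.val_neg, Units.val_one, coe_unitFive] at h
  rw [cocycleObstruction_apply]
  linear_combination -h

theorem cocycleObstruction_eq_zero_of_isCoboundary₁ (hf : IsCoboundary₁ f) :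
    cocycleObstruction s f = 0 := by
  obtain ⟨x, hx⟩ := hf
  simp only [cocycleObstruction_apply, ← hx, Units.smul_def, smul_eq_mul, Units.val_neg,
    Units.val_one, coe_unitFive]
  ring

theorem two_pow_mul_map_unitFive (hf : IsCocycle₁ f) : 2 ^ s * f (unitFive s) = 0 := by
  obtain ⟨y, hy⟩ := exists_geom_sum_five_eq s
  have hnorm := hf.map_pow (unitFive s) (2 ^ s)
  have hpow : unitFive s ^ 2 ^ s = 1 := orderOf_unitFive s ▸ pow_orderOf_eq_one _
  rw [hpow, map_one_of_isCocycle₁ hf] at hnorm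
  simp only [Units.smul_def, smul_eq_mul, Units.val_pow_eq_pow_val, coe_unitFive,
    ← sum_mul] at hnorm
  have hsum : ∑ i ∈ range (2 ^ s), (5 : ZMod (2 ^ (s + 2))) ^ i
      = 2 ^ s * (1 + 2 * (y : ZMod (2 ^ (s + 2)))) := by
    exact_mod_cast congrArg (Int.cast : ℤ → ZMod (2 ^ (s + 2))) hy
  rw [hsum, mul_right_comm, mul_comm] at hnorm
  exact (isUnit_one_add_two_mul _).mul_right_eq_zero.1 hnorm.symm

theorem isCoboundary₁_of_cocycleObstruction_eq_zero (hf : IsCocycle₁ f)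
    (h0 : cocycleObstruction s f = 0) : IsCoboundary₁ f := by
  rw [cocycleObstruction_apply] at h0
  obtain ⟨c, hc⟩ : ∃ c, f (-1) = 2 * c :=
    exists_eq_two_mul_of_two_pow_mul_eq_zero (k := s + 1) <| by
      linear_combination 2 ^ s * h0 - two_pow_mul_map_unitFive hf
  have hδ : IsCoboundary₁ fun g : (ZMod (2 ^ (s + 2)))ˣ => g • -c - -c := ⟨-c, fun _ => rfl⟩
  refine ⟨-c, congrFun (hδ.isCocycle₁.eq_of_eqOn_of_closure_eq_top hf
    (closure_neg_one_unitFive s) ?_)⟩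
  rintro g (rfl | rfl)
  · simp only [Units.smul_def, smul_eq_mul, Units.val_neg, Units.val_one, hc]
    ring
  · simp only [Units.smul_def, smul_eq_mul, coe_unitFive]
    linear_combination -h0 + 2 * hc

theorem isCocycle₁_mod4Cocycle : IsCocycle₁ (mod4Cocycle s) := by
  intro g h
  simp only [mod4Cocycle, Units.smul_def, smul_eq_mul, map_mul]
  rcases units_four_eq_one_or_eq_neg_one (unitsMapFour s g) with hg | hg <;>
  rcases units_four_eq_one_or_eq_neg_one (unitsMapFour s h) with hh | hh <;>
  simp [hg, hh, coe_mul_two_pow_of_unitsMapFour_eq_one,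
    coe_mul_two_pow_of_unitsMapFour_eq_neg_one, show (-1 : (ZMod 4)ˣ) ≠ 1 by decide]

theorem cocycleObstruction_mod4Cocycle : cocycleObstruction s (mod4Cocycle s) = 2 ^ (s + 1) := by
  simp [cocycleObstruction_apply, mod4Cocycle, show (-1 : (ZMod 4)ˣ) ≠ 1 by decide, pow_succ']

end Cocycles

section H1

variable {s : ℕ}

theorem H1π_eq_zero_iff_cocycleObstruction_eq_zero
    (f : cocycles₁ (Rep.ofDistribMulAction ℤ (ZMod (2 ^ (s + 2)))ˣ (ZMod (2 ^ (s + 2))))) :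
    H1π _ f = 0 ↔ cocycleObstruction s f = 0 := by
  rw [H1π_eq_zero_iff]
  exact ⟨fun h => cocycleObstruction_eq_zero_of_isCoboundary₁
      (isCoboundary₁_of_mem_coboundaries₁ _ h),
    fun h => (coboundariesOfIsCoboundary₁ (isCoboundary₁_of_cocycleObstruction_eq_zero
      (isCocycle₁_of_mem_cocycles₁ _ f.2) h)).2⟩

variable (s) in
noncomputable def mod4Class :
    H1 (Rep.ofDistribMulAction ℤ (ZMod (2 ^ (s + 2)))ˣ (ZMod (2 ^ (s + 2)))) :=
  H1π _ (cocyclesOfIsCocycle₁ isCocycle₁_mod4Cocycle)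

theorem mod4Class_ne_zero : mod4Class s ≠ 0 := by
  rw [mod4Class, Ne, H1π_eq_zero_iff_cocycleObstruction_eq_zero]
  exact cocycleObstruction_mod4Cocycle.trans_ne (two_pow_ne_zero (s + 1))

theorem H1_eq_zero_or_eq_mod4Class
    (x : H1 (Rep.ofDistribMulAction ℤ (ZMod (2 ^ (s + 2)))ˣ (ZMod (2 ^ (s + 2))))) :
    x = 0 ∨ x = mod4Class s := by
  induction x using H1_induction_on with | h f => ?_
  rcases eq_zero_or_eq_two_pow_of_two_mul_eq_zero (k := s + 1)
    (two_mul_cocycleObstruction (isCocycle₁_of_mem_cocycles₁ _ f.2)) with h | h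
  · exact .inl ((H1π_eq_zero_iff_cocycleObstruction_eq_zero f).2 h)
  · refine .inr ?_
    rw [mod4Class, ← sub_eq_zero, ← map_sub, H1π_eq_zero_iff_cocycleObstruction_eq_zero]
    exact (map_sub (cocycleObstruction s) (⇑f) (mod4Cocycle s)).trans
      (sub_eq_zero.2 (h.trans cocycleObstruction_mod4Cocycle.symm))

end H1

end ZMod

/-- For every `r ≥ 2`, the group cohomology `H¹((ℤ/2^rℤ)ˣ, ℤ/2^rℤ)`, with the unit group
acting by multiplication, is isomorphic to `ℤ/2ℤ`; equivalently,
`H¹(Gal(ℚ(ζ_{2^r})/ℚ), μ_{2^r}) ≅ ℤ/2ℤ`. -/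
theorem h1_units_zmod_two_pow (r : ℕ) (hr : 2 ≤ r) :
    Nonempty (groupCohomology.H1
      (Rep.ofDistribMulAction ℤ (ZMod (2 ^ r))ˣ (ZMod (2 ^ r))) ≃+ ZMod 2) := by
  obtain ⟨s, rfl⟩ : ∃ s, r = s + 2 := ⟨r - 2, by omega⟩
  have hgen : ∀ x, x ∈ AddSubgroup.zmultiples (ZMod.mod4Class s) := fun x => by
    rcases ZMod.H1_eq_zero_or_eq_mod4Class x with rfl | rfl
    exacts [zero_mem _, AddSubgroup.mem_zmultiples _]
  have hcard := (Nat.card_eq_two_iff' 0).2 ⟨ZMod.mod4Class s, ZMod.mod4Class_ne_zero,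
    fun x hx => (ZMod.H1_eq_zero_or_eq_mod4Class x).resolve_left hx⟩
  exact ⟨(zmodAddEquivOfGenerator hgen hcard).symm⟩
end
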